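/- arXiv:1504.00848 — 2 statements merged into one kernel-verified Lean document; each statement's English description precedes it below -/
import Mathlib

section
/- Let n and k be integers with 2 ≤ k and n > 2k, and let A = A_{n,k}. The homogeneous degree-(n−3) component of A is a one-dimensional F₂-vector space, and for every subset S ⊆ {1,…,n−1} with |S| ≤ k−1, the image in A of the monomial R^{n−3−|S|}·∏_{i∈S} V_i is nonzero if and only if the binomial coefficient C(n−2−|S|, k−1−|S|) is odd. -/
open MvPolynomial
open scoped TensorProduct

noncomputable section

/-- The relations defining `A_{n,k}`: the polynomial ring is
`F₂[R, V₁, …, V_{n−1}]`, realized as `MvPolynomial (Option (Fin (n-1))) (ZMod 2)`,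
where `X none` plays the role of `R` and `X (some j)` plays the role of `V_{j+1}`. -/
def polygonRels (n k : ℕ) : Set (MvPolynomial (Option (Fin (n - 1))) (ZMod 2)) :=
  (Set.range fun i : Fin (n - 1) => X (some i) ^ 2 + X (some i) * X none) ∪
  ((fun S : Finset (Fin (n - 1)) => ∏ i ∈ S, X (some i)) '' {S | S.card = k}) ∪
  ((fun L : Finset (Fin (n - 1)) =>
      ∑ S ∈ L.powerset.filter (fun S => S.card ≤ k - 1),
        X none ^ (L.card - 1 - S.card) * ∏ i ∈ S, X (some i)) ''
    {L | n - k ≤ L.card ∧ L.card ≤ n - 2})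

/-- The ideal `I_{n,k}`. -/
def polygonIdeal (n k : ℕ) : Ideal (MvPolynomial (Option (Fin (n - 1))) (ZMod 2)) :=
  Ideal.span (polygonRels n k)

/-- The algebra `A_{n,k} ≅ H^*(M̄_{n,n-2k}; Z/2)`. -/
abbrev PolygonAlg (n k : ℕ) :=
  MvPolynomial (Option (Fin (n - 1))) (ZMod 2) ⧸ polygonIdeal n k

/-- The class `R` in `A_{n,k}`. -/
def Rcl (n k : ℕ) : PolygonAlg n k := Ideal.Quotient.mk _ (X none)

/-- The class `V_{i+1}` in `A_{n,k}` (so `Vcl n k j` is `V_{j+1}` in 1-based notation). -/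
def Vcl (n k : ℕ) (i : Fin (n - 1)) : PolygonAlg n k := Ideal.Quotient.mk _ (X (some i))

/-- The zero divisor `a ⊗ 1 + 1 ⊗ a` in `A_{n,k} ⊗_{F₂} A_{n,k}`. -/
def zd {n k : ℕ} (a : PolygonAlg n k) : PolygonAlg n k ⊗[ZMod 2] PolygonAlg n k :=
  a ⊗ₜ 1 + 1 ⊗ₜ a

end

/-- The degree-`d` homogeneous component of the graded algebra `A_{n,k}`
(all generators `R, Vᵢ` have degree 1): the image in the quotient of the
submodule of homogeneous polynomials of degree `d`. -/
noncomputable def homComponent (n k d : ℕ) : Submodule (ZMod 2) (PolygonAlg n k) :=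
  (MvPolynomial.homogeneousSubmodule (Option (Fin (n - 1))) (ZMod 2) d).map
    (Ideal.Quotient.mkₐ (ZMod 2) (polygonIdeal n k)).toLinearMap

/-!
Modulo `V_i² = V_i R` every monomial of degree `n − 3` becomes a square-free class
`x_U = R^{n−3−|U|} ∏_{i∈U} V_i`, and `x_U = 0` as soon as `|U| ≥ k`. Multiplying the relation
(iii) for a set `L` disjoint from `U` with `|L| = n − 2 − |U|` by `∏_{i∈U} V_i` writes `x_U` in
terms of the classes `x_{U ∪ S}` with `∅ ≠ S ⊆ L`; for `|U| = k − 2` it shows that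
`x_{U ∪ {b}}` does not depend on `b`. Hence all `x_U` with `|U| = k − 1` agree, and one of them,
`μ`, spans the degree `n − 3` part.

Conversely, the linear functional sending a monomial `R^a V^e` of degree `n − 3` to
`C(n − 2 − |supp e|, n − 1 − k) mod 2` vanishes on the ideal: on the relations (iii) this is the
vanishing of `∑ⱼ C(l, j) C(y + j, b)` mod 2 for `b < l`, an `l`-th forward difference of a
polynomial of degree `b`. It takes the value `1` on `μ` and `C(n − 2 − |U|, n − 1 − k)` on `x_U`,
which gives both the dimension and the coefficients.
-/

open Finset

section Binomial

open fwdDiff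

theorem fwdDiff_iter_choose_eq_zero {b l : ℕ} (h : b < l) :
    (Δ_[1])^[l] (fun x ↦ x.choose b : ℕ → ℤ) = 0 := by
  obtain ⟨m, rfl⟩ := Nat.exists_eq_add_of_lt h
  rw [show b + m + 1 = m + 1 + b by ring, Function.iterate_add_apply,
    show (fun x ↦ x.choose b : ℕ → ℤ) = fun x ↦ x.choose (b + 0) from rfl,
    fwdDiff_iter_choose, Function.iterate_succ_apply]
  simp only [Nat.choose_zero_right, Nat.cast_one, fwdDiff_const]
  exact Function.iterate_fixed (by simp) m

theorem sum_choose_mul_choose_add_eq_zero_zmod_two {b l : ℕ} (h : b < l) (y : ℕ) :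
    ∑ j ∈ range (l + 1), (l.choose j * (y + j).choose b : ZMod 2) = 0 := by
  have := congr_fun (fwdDiff_iter_choose_eq_zero h) y
  rw [fwdDiff_iter_eq_sum_shift] at this
  have := congrArg (Int.cast : ℤ → ZMod 2) this
  push_cast at this
  simpa [CharTwo.neg_eq] using this

end Binomial

theorem Finset.sum_powerset_eq_add_sum_singleton {ι M : Type*} [DecidableEq ι] [AddCommMonoid M]
    (L : Finset ι) {f : Finset ι → M} (hf : ∀ S ⊆ L, 2 ≤ S.card → f S = 0) :
    ∑ S ∈ L.powerset, f S = f ∅ + ∑ a ∈ L, f {a} := by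
  induction L using Finset.induction with
  | empty => simp
  | insert a L ha ih =>
    have hinsert : ∑ S ∈ L.powerset, f (insert a S) = f {a} := by
      refine sum_eq_single_of_mem ∅ (empty_mem_powerset L) fun S hS hne ↦ hf _
        (insert_subset_insert a (mem_powerset.mp hS)) ?_
      rw [card_insert_of_notMem fun h ↦ ha (mem_powerset.mp hS h)]
      have := card_pos.mpr (nonempty_iff_ne_empty.mpr hne)
      omega
    rw [sum_powerset_insert ha, hinsert, ih fun S hS ↦ hf S (hS.trans (subset_insert a L)),
      sum_insert ha]
    abel

theorem Finset.eq_of_forall_insert_eq {ι M : Type*} [DecidableEq ι] {m : ℕ} {f : Finset ι → M}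
    (hf : ∀ W i j, i ∉ W → j ∉ W → (insert i W).card = m → f (insert i W) = f (insert j W))
    {U U' : Finset ι} (hU : U.card = m) (hU' : U'.card = m) : f U = f U' := by
  induction hd : (U \ U').card generalizing U with
  | zero =>
    rw [eq_of_subset_of_card_le (sdiff_eq_empty_iff_subset.mp (card_eq_zero.mp hd)) (by omega)]
  | succ d ih =>
    obtain ⟨j, hj⟩ : (U \ U').Nonempty := card_pos.mp (by omega)
    obtain ⟨i, hi⟩ : (U' \ U).Nonempty := card_pos.mp (by rw [card_sdiff_comm (by omega)]; omega)
    rw [mem_sdiff] at hi hj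
    have hjU : insert j (U.erase j) = U := insert_erase hj.1
    have hiU : i ∉ U.erase j := fun h ↦ hi.2 (mem_of_mem_erase h)
    calc f U = f (insert i (U.erase j)) := by
          conv_lhs => rw [← hjU]
          exact hf _ j i (notMem_erase j U) hiU (by rwa [hjU])
      _ = f U' := ih ?_ ?_
    · rw [card_insert_of_notMem hiU, card_erase_of_mem hj.1]
      have := card_pos.mpr ⟨j, hj.1⟩
      omega
    · rw [← Nat.add_one_inj, ← hd, ← card_erase_add_one (mem_sdiff.mpr hj)]
      congr 2
      ext x
      simp only [mem_sdiff, mem_insert, mem_erase]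
      constructor
      · rintro ⟨rfl | ⟨hxj, hxU⟩, hxU'⟩
        · exact absurd hi.1 hxU'
        · exact ⟨hxj, hxU, hxU'⟩
      · rintro ⟨hxj, hxU, hxU'⟩
        exact ⟨Or.inr ⟨hxj, hxU⟩, hxU'⟩

theorem pow_succ_eq_mul_pow_of_sq_eq_mul {M : Type*} [CommMonoid M] {v r : M}
    (h : v ^ 2 = v * r) (m : ℕ) : v ^ (m + 1) = v * r ^ m := by
  induction m with
  | zero => simp
  | succ m ih => rw [pow_succ, ih, mul_right_comm, ← sq, h, mul_assoc, ← pow_succ']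

theorem Finsupp.card_support_le_degree {ι : Type*} (f : ι →₀ ℕ) : f.support.card ≤ f.degree := by
  simpa [Finsupp.degree_apply] using card_nsmul_le_sum f.support f 1 fun i hi ↦
    Nat.one_le_iff_ne_zero.mpr (Finsupp.mem_support_iff.mp hi)

theorem Finsupp.degree_eq_apply_none_add_degree_some {ι : Type*} [Fintype ι]
    (f : Option ι →₀ ℕ) : f.degree = f none + f.some.degree := by
  simp [Finsupp.degree_eq_sum, Fintype.sum_option, Finsupp.some_apply]

theorem Finsupp.prod_pow_eq_prod_support_mul_pow {ι M : Type*} [CommMonoid M] (f : ι →₀ ℕ)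
    {v : ι → M} {r : M} (hv : ∀ i, v i ^ 2 = v i * r) :
    (f.prod fun i e ↦ v i ^ e) = (∏ i ∈ f.support, v i) * r ^ (f.degree - f.support.card) := by
  have hpos (i) (hi : i ∈ f.support) : 1 ≤ f i :=
    Nat.one_le_iff_ne_zero.mpr (Finsupp.mem_support_iff.mp hi)
  have hexp : f.degree - f.support.card = ∑ i ∈ f.support, (f i - 1) := by
    rw [sum_tsub_distrib _ hpos, Finsupp.degree_apply, card_eq_sum_ones]
  rw [hexp, ← prod_pow_eq_pow_sum, ← prod_mul_distrib, Finsupp.prod]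
  refine Finset.prod_congr rfl fun i hi ↦ ?_
  rw [← pow_succ_eq_mul_pow_of_sq_eq_mul (hv i), Nat.sub_add_cancel (hpos i hi)]

namespace PolygonAlg

noncomputable def sqfreeExp {ι : Type*} (S : Finset ι) : Option ι →₀ ℕ :=
  ∑ i ∈ S, Finsupp.single (some i) 1

theorem degree_sqfreeExp {ι : Type*} (S : Finset ι) : (sqfreeExp S).degree = S.card := by
  simp [sqfreeExp, map_sum]

theorem support_some_sqfreeExp {ι : Type*} [DecidableEq ι] (S : Finset ι) :
    (sqfreeExp S).some.support = S := by
  ext j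
  simp [sqfreeExp, Finsupp.some_apply, Finsupp.finsetSum_apply, Finsupp.single_apply]

theorem X_pow_mul_prod_X_some {ι R : Type*} [CommSemiring R] (a : ℕ) (S : Finset ι) :
    (X none ^ a * ∏ i ∈ S, X (some i) : MvPolynomial (Option ι) R) =
      monomial (Finsupp.single none a + sqfreeExp S) 1 := by
  have hprod : ∏ i ∈ S, X (some i) = (monomial (sqfreeExp S) 1 : MvPolynomial (Option ι) R) :=
    (monomial_sum_one S fun i ↦ Finsupp.single (some i) 1).symm
  rw [X_pow_eq_monomial, hprod, monomial_mul, one_mul]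

variable {n k : ℕ}

/- For `u ≤ k − 1` this is `C(n − 2 − u, k − 1 − u)`; unlike that form, it vanishes for
`k ≤ u`. -/
def topCoeff (n k u : ℕ) : ZMod 2 := ((n - 2 - u).choose (n - 1 - k) : ZMod 2)

theorem topCoeff_eq_zero (hkn : k + 1 < n) {u : ℕ} (hu : k ≤ u) : topCoeff n k u = 0 := by
  rw [topCoeff, Nat.choose_eq_zero_of_lt (by omega), Nat.cast_zero]

theorem topCoeff_sub_one (hk : 1 ≤ k) (hkn : k < n) : topCoeff n k (k - 1) = 1 := by
  rw [topCoeff, show n - 2 - (k - 1) = n - 1 - k by omega, Nat.choose_self, Nat.cast_one]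

theorem sum_powerset_topCoeff_add_card (hkn : k < n) {ι : Type*} (L : Finset ι) {t : ℕ}
    (hL : n - k ≤ L.card) (htL : t + L.card ≤ n - 2) :
    ∑ S ∈ L.powerset, topCoeff n k (t + S.card) = 0 := by
  rw [sum_powerset_apply_card (fun u ↦ topCoeff n k (t + u)), ← sum_range_reflect,
    ← sum_choose_mul_choose_add_eq_zero_zmod_two (b := n - 1 - k) (l := L.card) (by omega)
      (n - 2 - t - L.card)]
  refine sum_congr rfl fun j hj ↦ ?_
  rw [mem_range] at hj
  rw [nsmul_eq_mul, topCoeff, Nat.add_sub_cancel, Nat.choose_symm (by omega)]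
  congr 3
  omega

theorem sum_powerset_topCoeff_card_union (hkn : k < n) {ι : Type*} [DecidableEq ι]
    (T L : Finset ι) (hL : n - k ≤ L.card) (hTL : T.card + L.card ≤ n - 2) :
    ∑ S ∈ L.powerset, topCoeff n k (T ∪ S).card = 0 := by
  by_cases hdisj : Disjoint T L
  · rw [← sum_powerset_topCoeff_add_card hkn L hL hTL]
    refine sum_congr rfl fun S hS ↦ ?_
    rw [card_union_of_disjoint (hdisj.mono_right (mem_powerset.mp hS))]
  · obtain ⟨a, haT, haL⟩ := not_disjoint_iff.mp hdisj
    have hunion (S : Finset ι) : T ∪ insert a S = T ∪ S := by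
      rw [union_insert, insert_eq_of_mem (mem_union_left S haT)]
    rw [← insert_erase haL, sum_powerset_insert (notMem_erase a L)]
    simp only [hunion, CharTwo.add_self_eq_zero]

noncomputable def topWeight (n k : ℕ) (σ : Option (Fin (n - 1)) →₀ ℕ) : ZMod 2 :=
  if σ.degree = n - 3 then topCoeff n k σ.some.support.card else 0

noncomputable def topFunctional (n k : ℕ) :
    MvPolynomial (Option (Fin (n - 1))) (ZMod 2) →ₗ[ZMod 2] ZMod 2 :=
  (basisMonomials _ (ZMod 2)).constr (ZMod 2) (topWeight n k)

theorem topFunctional_monomial (σ : Option (Fin (n - 1)) →₀ ℕ) :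
    topFunctional n k (monomial σ 1) = topWeight n k σ := by
  rw [topFunctional, ← congr_fun (coe_basisMonomials _ _) σ, Module.Basis.constr_basis]

theorem topFunctional_monomial_mul (σ : Option (Fin (n - 1)) →₀ ℕ) (a : ℕ)
    (S : Finset (Fin (n - 1))) :
    topFunctional n k (monomial σ 1 * (X none ^ a * ∏ i ∈ S, X (some i))) =
      if σ.degree + a + S.card = n - 3 then topCoeff n k (σ.some.support ∪ S).card else 0 := by
  rw [X_pow_mul_prod_X_some, monomial_mul, one_mul, topFunctional_monomial, topWeight]
  simp only [map_add, Finsupp.degree_single, degree_sqfreeExp, Finsupp.some_add,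
    Finsupp.some_single_none, zero_add, Finsupp.support_add_eq_union, support_some_sqfreeExp,
    add_assoc]

theorem topFunctional_monomial_mul_sq_add (σ : Option (Fin (n - 1)) →₀ ℕ) (i : Fin (n - 1)) :
    topFunctional n k (monomial σ 1 * (X (some i) ^ 2 + X (some i) * X none)) = 0 := by
  set τ := σ + Finsupp.single (some i) 1
  have hsplit : monomial σ (1 : ZMod 2) * (X (some i) ^ 2 + X (some i) * X none) =
      monomial τ 1 * (X none ^ 0 * ∏ j ∈ {i}, X (some j)) +
        monomial τ 1 * (X none ^ 1 * ∏ j ∈ ∅, X (some j)) := by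
    simp only [τ, monomial_add_single, prod_singleton, prod_empty]
    ring
  have hi : i ∈ τ.some.support := by simp [τ, Finsupp.some_apply]
  rw [hsplit, map_add, topFunctional_monomial_mul, topFunctional_monomial_mul,
    union_singleton, insert_eq_of_mem hi, union_empty, card_singleton, card_empty]
  exact CharTwo.add_self_eq_zero _

theorem topFunctional_monomial_mul_prod_eq_zero (hkn : k + 1 < n)
    (σ : Option (Fin (n - 1)) →₀ ℕ) {S : Finset (Fin (n - 1))} (hS : S.card = k) :
    topFunctional n k (monomial σ 1 * ∏ i ∈ S, X (some i)) = 0 := by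
  rw [← one_mul (∏ i ∈ S, _), ← pow_zero (X none), topFunctional_monomial_mul]
  split_ifs
  · exact topCoeff_eq_zero hkn (hS ▸ card_le_card subset_union_right)
  · rfl

theorem topFunctional_monomial_mul_sum_eq_zero (hk : 1 ≤ k) (hnk : 2 * k < n)
    (σ : Option (Fin (n - 1)) →₀ ℕ) {L : Finset (Fin (n - 1))} (hL : n - k ≤ L.card) :
    topFunctional n k (monomial σ 1 * ∑ S ∈ L.powerset with S.card ≤ k - 1,
      X none ^ (L.card - 1 - S.card) * ∏ i ∈ S, X (some i)) = 0 := by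
  rw [mul_sum, map_sum]
  by_cases hdeg : σ.degree + (L.card - 1) = n - 3
  · have hT := (Finsupp.card_support_le_degree σ.some).trans
      (σ.degree_eq_apply_none_add_degree_some ▸ le_add_self)
    rw [← sum_powerset_topCoeff_card_union (by omega) σ.some.support L hL (by omega), sum_filter]
    refine sum_congr rfl fun S hS ↦ ?_
    split_ifs with hSk
    · rw [topFunctional_monomial_mul,
        if_pos (show σ.degree + (L.card - 1 - S.card) + S.card = n - 3 by omega)]
    · exact (topCoeff_eq_zero (by omega) ((by omega : k ≤ S.card).trans
        (card_le_card subset_union_right))).symm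
  · refine sum_eq_zero fun S hS ↦ ?_
    obtain ⟨hSL, hSk⟩ := mem_filter.mp hS
    have := card_le_card (mem_powerset.mp hSL)
    rw [topFunctional_monomial_mul,
      if_neg (show σ.degree + (L.card - 1 - S.card) + S.card ≠ n - 3 by omega)]

theorem topFunctional_mul_eq_zero_of_mem_polygonRels (hk : 1 ≤ k) (hnk : 2 * k < n)
    {g : MvPolynomial (Option (Fin (n - 1))) (ZMod 2)} (hg : g ∈ polygonRels n k)
    (q : MvPolynomial (Option (Fin (n - 1))) (ZMod 2)) : topFunctional n k (q * g) = 0 := by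
  induction q using MvPolynomial.induction_on' with
  | monomial σ a =>
    rw [show monomial σ a = a • monomial σ 1 by rw [smul_monomial, smul_eq_mul, mul_one],
      smul_mul_assoc, map_smul, smul_eq_zero]
    right
    rcases hg with (⟨i, rfl⟩ | ⟨S, hS, rfl⟩) | ⟨L, hL, rfl⟩
    · exact topFunctional_monomial_mul_sq_add σ i
    · exact topFunctional_monomial_mul_prod_eq_zero (by omega) σ hS
    · exact topFunctional_monomial_mul_sum_eq_zero hk hnk σ hL.1
  | add p q hp hq => rw [add_mul, map_add, hp, hq, add_zero]

theorem topFunctional_eq_zero_of_mem_polygonIdeal (hk : 1 ≤ k) (hnk : 2 * k < n)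
    {p : MvPolynomial (Option (Fin (n - 1))) (ZMod 2)} (hp : p ∈ polygonIdeal n k) :
    topFunctional n k p = 0 := by
  suffices ∀ q, topFunctional n k (q * p) = 0 by simpa using this 1
  induction hp using Submodule.span_induction with
  | mem g hg => exact topFunctional_mul_eq_zero_of_mem_polygonRels hk hnk hg
  | zero => simp
  | add x y _ _ hx hy => intro q; rw [mul_add, map_add, hx, hy, add_zero]
  | smul c x _ hx => intro q; rw [smul_eq_mul, ← mul_assoc]; exact hx _

theorem topFunctional_eq_of_mk_eq (hk : 1 ≤ k) (hnk : 2 * k < n)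
    {p q : MvPolynomial (Option (Fin (n - 1))) (ZMod 2)}
    (h : Ideal.Quotient.mk (polygonIdeal n k) p = Ideal.Quotient.mk _ q) :
    topFunctional n k p = topFunctional n k q := by
  rw [← sub_eq_zero, ← map_sub]
  exact topFunctional_eq_zero_of_mem_polygonIdeal hk hnk (Ideal.Quotient.eq.mp h)

noncomputable def topMonomial (n : ℕ) (U : Finset (Fin (n - 1))) :
    MvPolynomial (Option (Fin (n - 1))) (ZMod 2) :=
  X none ^ (n - 3 - U.card) * ∏ i ∈ U, X (some i)

noncomputable def topClass (n k : ℕ) (U : Finset (Fin (n - 1))) : PolygonAlg n k :=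
  Ideal.Quotient.mk _ (topMonomial n U)

theorem isHomogeneous_topMonomial {U : Finset (Fin (n - 1))} (hU : U.card ≤ n - 3) :
    (topMonomial n U).IsHomogeneous (n - 3) := by
  rw [topMonomial, X_pow_mul_prod_X_some]
  refine isHomogeneous_monomial _ ?_
  rw [map_add, Finsupp.degree_single, degree_sqfreeExp]
  omega

theorem topFunctional_topMonomial {U : Finset (Fin (n - 1))} (hU : U.card ≤ n - 3) :
    topFunctional n k (topMonomial n U) = topCoeff n k U.card := by
  rw [topMonomial, X_pow_mul_prod_X_some, topFunctional_monomial, topWeight]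
  simp only [map_add, Finsupp.degree_single, degree_sqfreeExp, Finsupp.some_add,
    Finsupp.some_single_none, zero_add, support_some_sqfreeExp]
  rw [if_pos (by omega)]

theorem mk_eq_zero_of_mem_polygonRels {g : MvPolynomial (Option (Fin (n - 1))) (ZMod 2)}
    (hg : g ∈ polygonRels n k) : Ideal.Quotient.mk (polygonIdeal n k) g = 0 :=
  Ideal.Quotient.eq_zero_iff_mem.mpr (Ideal.subset_span hg)

theorem mk_X_some_sq (i : Fin (n - 1)) :
    Ideal.Quotient.mk (polygonIdeal n k) (X (some i)) ^ 2 =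
      Ideal.Quotient.mk (polygonIdeal n k) (X (some i)) * Ideal.Quotient.mk _ (X none) := by
  rw [← map_pow, ← map_mul, ← sub_eq_zero, ← map_sub, CharTwo.sub_eq_add]
  exact mk_eq_zero_of_mem_polygonRels (Or.inl (Or.inl ⟨i, rfl⟩))

theorem mk_monomial_eq_topClass {σ : Option (Fin (n - 1)) →₀ ℕ} (hσ : σ.degree = n - 3) :
    Ideal.Quotient.mk (polygonIdeal n k) (monomial σ 1) = topClass n k σ.some.support := by
  rw [monomial_eq, C_1, one_mul, map_finsuppProd]
  simp only [map_pow]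
  rw [Finsupp.prod_option_index _ _ (by simp) (by simp [pow_add]),
    Finsupp.prod_pow_eq_prod_support_mul_pow _ mk_X_some_sq, topClass, topMonomial, map_mul,
    map_pow, map_prod, mul_left_comm, ← pow_add, mul_comm]
  congr 2
  rw [σ.degree_eq_apply_none_add_degree_some] at hσ
  have := Finsupp.card_support_le_degree σ.some
  omega

theorem topClass_eq_zero {U : Finset (Fin (n - 1))} (hU : k ≤ U.card) : topClass n k U = 0 := by
  obtain ⟨S, hSU, hS⟩ := exists_subset_card_eq hU
  rw [topClass, topMonomial, ← prod_sdiff hSU, map_mul, map_mul,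
    mk_eq_zero_of_mem_polygonRels (Or.inl (Or.inr ⟨S, hS, rfl⟩)), mul_zero, mul_zero]

theorem topClass_ne_zero (hk : 1 ≤ k) (hnk : 2 * k < n) {S₀ : Finset (Fin (n - 1))}
    (hS₀ : S₀.card = k - 1) : topClass n k S₀ ≠ 0 := by
  intro h
  have := topFunctional_eq_of_mk_eq hk hnk (h.trans (map_zero _).symm)
  rw [topFunctional_topMonomial (by omega), map_zero, hS₀, topCoeff_sub_one hk (by omega)] at this
  exact one_ne_zero this

/- The relation (iii) for `L`, multiplied by `∏_{i ∈ T} V_i`. -/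
theorem sum_powerset_topClass_union_eq_zero {T L : Finset (Fin (n - 1))} (hTL : Disjoint T L)
    (hL : n - k ≤ L.card) (hLT : L.card + T.card = n - 2) :
    ∑ S ∈ L.powerset, topClass n k (S ∪ T) = 0 := by
  have hrel := mk_eq_zero_of_mem_polygonRels (k := k) (Or.inr ⟨L, ⟨hL, by omega⟩, rfl⟩)
  rw [← sum_filter_of_ne (p := (·.card ≤ k - 1)) fun S _ hS ↦ ?_]
  · calc _ = Ideal.Quotient.mk (polygonIdeal n k)
          ((∑ S ∈ L.powerset with S.card ≤ k - 1,
            X none ^ (L.card - 1 - S.card) * ∏ i ∈ S, X (some i)) * ∏ i ∈ T, X (some i)) := by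
          rw [sum_mul, map_sum]
          refine sum_congr rfl fun S hS ↦ ?_
          have hST : Disjoint S T := (hTL.mono_right (mem_powerset.mp (mem_filter.mp hS).1)).symm
          rw [topClass, topMonomial, prod_union hST, card_union_of_disjoint hST, mul_assoc]
          congr 3
          omega
      _ = 0 := by rw [map_mul, hrel, zero_mul]
  · by_contra hSk
    exact hS (topClass_eq_zero ((show k ≤ S.card by omega).trans (card_le_card subset_union_left)))

theorem topClass_insert_eq {W : Finset (Fin (n - 1))} {i j : Fin (n - 1)} (hi : i ∉ W)
    (hj : j ∉ W) (hW : (insert i W).card = k - 1) :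
    topClass n k (insert i W) = topClass n k (insert j W) := by
  rw [card_insert_of_notMem hi] at hW
  suffices key : ∀ b ∉ W, topClass n k (insert b W) =
      topClass n k W + ∑ a ∈ univ \ W, topClass n k (insert a W) by
    rw [key i hi, key j hj]
  intro b hb
  have hbW : b ∈ univ \ W := mem_sdiff.mpr ⟨mem_univ b, hb⟩
  have hWc : (univ \ W).card = n - 1 - W.card := by rw [card_univ_sdiff, Fintype.card_fin]
  have hpos := card_pos.mpr ⟨b, hbW⟩
  have hcard : ((univ \ W).erase b).card = n - k := by
    rw [card_erase_of_mem hbW]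
    omega
  have hdisj : Disjoint W ((univ \ W).erase b) := disjoint_sdiff.mono_right (erase_subset b _)
  have hrel := sum_powerset_topClass_union_eq_zero hdisj hcard.ge (by omega)
  rw [sum_powerset_eq_add_sum_singleton, empty_union, sum_erase_eq_sub hbW] at hrel
  · simp only [singleton_union] at hrel
    rw [add_sub, sub_eq_zero] at hrel
    exact hrel.symm
  · intro S hS hS2
    refine topClass_eq_zero ?_
    rw [card_union_of_disjoint (hdisj.mono_right hS).symm]
    omega

theorem topClass_mem_span (hkn : k ≤ n) {S₀ : Finset (Fin (n - 1))} (hS₀ : S₀.card = k - 1)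
    (U : Finset (Fin (n - 1))) : topClass n k U ∈ Submodule.span (ZMod 2) {topClass n k S₀} := by
  induction hd : k - U.card using Nat.strong_induction_on generalizing U with
  | _ d ih =>
  rcases lt_trichotomy U.card (k - 1) with hlt | heq | hgt
  · obtain ⟨L, hLU, hL⟩ := exists_subset_card_eq (s := univ \ U) (n := n - 2 - U.card)
      (by rw [card_univ_sdiff, Fintype.card_fin]; omega)
    have hdisj : Disjoint U L := disjoint_sdiff.mono_right hLU
    have hrel := sum_powerset_topClass_union_eq_zero (k := k) hdisj (by omega) (by omega)
    rw [← add_sum_erase _ _ (empty_mem_powerset L), empty_union, add_eq_zero_iff_eq_neg] at hrel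
    rw [hrel]
    refine neg_mem (sum_mem fun S hS ↦ ih _ ?_ _ rfl)
    obtain ⟨hne, hSL⟩ := mem_erase.mp hS
    rw [card_union_of_disjoint (hdisj.mono_right (mem_powerset.mp hSL)).symm]
    have := card_pos.mpr (nonempty_iff_ne_empty.mpr hne)
    omega
  · rw [eq_of_forall_insert_eq (fun W i j hi hj hW ↦ topClass_insert_eq hi hj hW) heq hS₀]
    exact Submodule.mem_span_singleton_self _
  · rw [topClass_eq_zero (U := U) (by omega)]
    exact Submodule.zero_mem _

theorem homComponent_eq_span (hkn : k + 2 ≤ n) {S₀ : Finset (Fin (n - 1))}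
    (hS₀ : S₀.card = k - 1) :
    homComponent n k (n - 3) = Submodule.span (ZMod 2) {topClass n k S₀} := by
  apply le_antisymm
  · rw [homComponent, homogeneousSubmodule_eq_finsupp_supported,
      AddMonoidAlgebra.supported_eq_span_single, Submodule.map_span, Submodule.span_le]
    rintro _ ⟨_, ⟨σ, hσ, rfl⟩, rfl⟩
    simp only [AlgHom.toLinearMap_apply, Ideal.Quotient.mkₐ_eq_mk, single_eq_monomial]
    rw [mk_monomial_eq_topClass hσ]
    exact topClass_mem_span (by omega) hS₀ _
  · rw [Submodule.span_le, Set.singleton_subset_iff]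
    exact ⟨topMonomial n S₀, isHomogeneous_topMonomial (by omega), rfl⟩

theorem topClass_eq_topCoeff_smul (hk : 1 ≤ k) (hnk : 2 * k < n) {S₀ : Finset (Fin (n - 1))}
    (hS₀ : S₀.card = k - 1) {U : Finset (Fin (n - 1))} (hU : U.card ≤ n - 3) :
    topClass n k U = topCoeff n k U.card • topClass n k S₀ := by
  obtain ⟨a, ha⟩ := Submodule.mem_span_singleton.mp (topClass_mem_span (by omega) hS₀ U)
  have hmk : Ideal.Quotient.mk (polygonIdeal n k) (a • topMonomial n S₀) =
      Ideal.Quotient.mk _ (topMonomial n U) := by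
    rw [← Ideal.Quotient.mkₐ_eq_mk (ZMod 2), map_smul]
    exact ha
  have := topFunctional_eq_of_mk_eq hk hnk hmk
  rw [map_smul, topFunctional_topMonomial (by omega), topFunctional_topMonomial hU, hS₀,
    topCoeff_sub_one hk (by omega), smul_eq_mul, mul_one] at this
  rw [← ha, this]

end PolygonAlg

/-- The degree-`(n−3)` component of `A_{n,k}` is a one-dimensional `F₂`-vector space,
and the image of the monomial `R^{n−3−|S|}·∏_{i∈S} V_i` (for `|S| ≤ k−1`) is nonzero
iff the binomial coefficient `C(n−2−|S|, k−1−|S|)` is odd.  Here the subset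
`S ⊆ {1,…,n−1}` is realized as `S : Finset (Fin (n-1))`, with `i ∈ S` corresponding
to `V_{i+1}`, i.e. the variable `X (some i)`. -/
theorem top_component_rank_one (n k : ℕ) (hk : 2 ≤ k) (hnk : 2 * k < n) :
    Module.finrank (ZMod 2) (homComponent n k (n - 3)) = 1 ∧
    ∀ S : Finset (Fin (n - 1)), S.card ≤ k - 1 →
      ((Ideal.Quotient.mk (polygonIdeal n k)
          (X none ^ (n - 3 - S.card) * ∏ i ∈ S, X (some i)) ≠ 0) ↔
        Odd (Nat.choose (n - 2 - S.card) (k - 1 - S.card))) := by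
  obtain ⟨S₀, -, hS₀⟩ := exists_subset_card_eq (s := (univ : Finset (Fin (n - 1)))) (n := k - 1)
    (by rw [card_univ, Fintype.card_fin]; omega)
  have hμ := PolygonAlg.topClass_ne_zero (by omega) hnk hS₀
  refine ⟨by rw [PolygonAlg.homComponent_eq_span (by omega) hS₀, finrank_span_singleton hμ],
    fun S hS ↦ ?_⟩
  change PolygonAlg.topClass n k S ≠ 0 ↔ _
  rw [PolygonAlg.topClass_eq_topCoeff_smul (by omega) hnk hS₀ (by omega),
    smul_ne_zero_iff_left hμ, PolygonAlg.topCoeff, ZMod.natCast_ne_zero_iff_odd,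
    Nat.choose_symm_of_eq_add (show n - 2 - S.card = n - 1 - k + (k - 1 - S.card) by omega)]
end

section
/- Assume Notation (t, k₀, B, D, C) with B even and D = 0, and let A = A_{n,k}. There exists an F₂-linear map φ₃ from the homogeneous degree-(n−4) component of A to F₂ such that for every subset S ⊆ {1,…,n−1} with |S| ≤ k−1, φ₃ sends the class of the monomial R^{n−4−|S|}·∏_{i∈S} V_i to 1 if |S| < k−1 and to 0 if |S| = k−1. -/
open MvPolynomial
open scoped TensorProduct

/-!
The functional on `F₂[R, V₁, …, V_{n−1}]` sending a monomial to `1` exactly when it has degree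
`n − 4` and involves at most `k − 2` distinct `Vᵢ` descends to `A_{n,k}`. It kills
`Vᵢ² + Vᵢ R` because both terms have the same degree and the same `V`-support, and it kills
products of `k` distinct `Vᵢ`. A relation of type (iii) for `L`, multiplied by a monomial of
`V`-support `T`, is sent to the number mod 2 of `S ⊆ L` with `|T ∪ S| ≤ k − 2`. If `T` meets `L`
in some `i`, toggling `i` pairs these subsets off. Otherwise the count is
`∑_{j ≤ M} C(|L|, j) ≡ C(|L| − 1, M) (mod 2)` with `M = k − 2 − |T|`. Writing
`|L| − 1 = (n − k − 1) + r`, the degree constraint forces `r < M < 2^{t+1}`, and `2^{t+1}` divides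
`n − k − 1` because `B` is even and `D = 0`, so by Lucas `C(|L| − 1, M) ≡ C(r, M) = 0`.
-/

open Finset

theorem cast_choose_two_pow_mul_add (s b r m : ℕ) (hr : r < 2 ^ s) (hm : m < 2 ^ s) :
    ((2 ^ s * b + r).choose m : ZMod 2) = r.choose m := by
  have : Fact (Nat.Prime 2) := ⟨Nat.prime_two⟩
  have lucas (N m : ℕ) :
      (N.choose m : ZMod 2) = (N % 2).choose (m % 2) * (N / 2).choose (m / 2) := by
    exact_mod_cast (ZMod.natCast_eq_natCast_iff _ _ _).mpr
      Choose.choose_modEq_choose_mod_mul_choose_div_nat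
  induction s generalizing r m with
  | zero => simp_all
  | succ s ih =>
    have h2 : 2 ^ (s + 1) * b = 2 * (2 ^ s * b) := by ring
    rw [lucas, show (2 ^ (s + 1) * b + r) % 2 = r % 2 by omega,
      show (2 ^ (s + 1) * b + r) / 2 = 2 ^ s * b + r / 2 by omega,
      ih (r / 2) (m / 2) (by rw [pow_succ] at hr; omega) (by rw [pow_succ] at hm; omega), ← lucas]

theorem cast_sum_range_choose_succ (e M : ℕ) :
    ∑ m ∈ range (M + 1), ((e + 1).choose m : ZMod 2) = e.choose M := by
  simpa [CharTwo.neg_eq] using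
    congrArg (Int.cast : ℤ → ZMod 2) (Int.alternating_sum_range_choose_eq_choose (n := e) (m := M))

theorem sum_powerset_card_le_eq_choose {α : Type*} (L : Finset α) {M : ℕ} (hM : M < L.card) :
    ∑ S ∈ L.powerset, (if S.card ≤ M then (1 : ZMod 2) else 0) = (L.card - 1).choose M := by
  obtain ⟨e, he⟩ : ∃ e, L.card = e + 1 := ⟨L.card - 1, by omega⟩
  rw [sum_powerset_apply_card (fun j => if j ≤ M then (1 : ZMod 2) else 0), he,
    Nat.add_sub_cancel, ← cast_sum_range_choose_succ]
  simp only [smul_ite, nsmul_eq_mul, mul_one, smul_zero]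
  rw [← sum_filter]
  congr 1
  ext j
  simp only [mem_filter, mem_range]
  omega

theorem sum_powerset_union_eq_zero {α R : Type*} [DecidableEq α] [Ring R] [CharP R 2]
    (f : Finset α → R) {T L : Finset α} (h : (T ∩ L).Nonempty) :
    ∑ S ∈ L.powerset, f (T ∪ S) = 0 := by
  obtain ⟨i, hi⟩ := h
  rw [mem_inter] at hi
  have hins (S : Finset α) : T ∪ insert i S = T ∪ S := by
    rw [union_insert, insert_eq_of_mem (mem_union_left _ hi.1)]
  rw [← insert_erase hi.2, sum_powerset_insert (notMem_erase i L)]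
  simp only [hins, CharTwo.add_self_eq_zero]

theorem sum_powerset_card_union_le_eq_zero {α : Type*} [DecidableEq α] (T L : Finset α)
    {c s b r : ℕ} (hc : c < 2 ^ s) (hb : 0 < b) (hL : L.card = 2 ^ s * b + r + 1)
    (hr : T.card + r < c) :
    ∑ S ∈ L.powerset, (if (T ∪ S).card ≤ c then (1 : ZMod 2) else 0) = 0 := by
  by_cases hTL : (T ∩ L).Nonempty
  · exact sum_powerset_union_eq_zero (fun U => if U.card ≤ c then (1 : ZMod 2) else 0) hTL
  have hcard (S) (hS : S ∈ L.powerset) :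
      (if (T ∪ S).card ≤ c then (1 : ZMod 2) else 0) = if S.card ≤ c - T.card then 1 else 0 := by
    have hdisj : Disjoint T S := disjoint_of_subset_right (mem_powerset.1 hS)
      (disjoint_iff_inter_eq_empty.2 (not_nonempty_iff_eq_empty.1 hTL))
    rw [card_union_of_disjoint hdisj]
    exact if_congr (by omega) rfl rfl
  have hbig : 2 ^ s ≤ 2 ^ s * b := Nat.le_mul_of_pos_right _ hb
  rw [sum_congr rfl hcard, sum_powerset_card_le_eq_choose L (by omega), hL, Nat.add_sub_cancel,
    cast_choose_two_pow_mul_add s b r _ (by omega) (by omega), Nat.choose_eq_zero_of_lt (by omega),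
    Nat.cast_zero]

section VariableSupport

variable {ι : Type*}

noncomputable def vSupport (d : Option ι →₀ ℕ) : Finset ι :=
  d.support.preimage some (Option.some_injective ι).injOn

@[simp]
theorem mem_vSupport {d : Option ι →₀ ℕ} {i : ι} : i ∈ vSupport d ↔ d (some i) ≠ 0 := by
  simp [vSupport]

theorem card_vSupport_le_degree (d : Option ι →₀ ℕ) : (vSupport d).card ≤ d.degree := by
  calc (vSupport d).card = ((vSupport d).map ⟨some, Option.some_injective ι⟩).card :=
        (card_map _).symm
    _ ≤ d.support.card := card_le_card fun x => by
        simp only [mem_map, mem_vSupport, Function.Embedding.coeFn_mk, Finsupp.mem_support_iff]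
        rintro ⟨i, hi, rfl⟩
        exact hi
    _ ≤ d.degree := by
        simpa [Finsupp.degree_apply] using card_nsmul_le_sum d.support d 1
          fun i hi => Nat.one_le_iff_ne_zero.2 (Finsupp.mem_support_iff.1 hi)

theorem vSupport_single_none (m : ℕ) : vSupport (Finsupp.single (none : Option ι) m) = ∅ := by
  ext i; simp

theorem degree_sum_single_some (S : Finset ι) :
    (∑ i ∈ S, Finsupp.single (some i) 1 : Option ι →₀ ℕ).degree = S.card := by
  simp [map_sum]

theorem monomial_mul_X_pow_mul_prod {R : Type*} [CommSemiring R] (d : Option ι →₀ ℕ) (a : R)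
    (e : ℕ) (S : Finset ι) :
    monomial d a * (X none ^ e * ∏ i ∈ S, X (some i)) =
      monomial (d + Finsupp.single none e + ∑ i ∈ S, Finsupp.single (some i) 1) a := by
  rw [X_pow_eq_monomial]
  simp only [X, ← monomial_sum_one, monomial_mul, mul_one, add_assoc]

variable [DecidableEq ι]

theorem vSupport_add (d e : Option ι →₀ ℕ) : vSupport (d + e) = vSupport d ∪ vSupport e := by
  ext i
  simp only [mem_vSupport, mem_union, Finsupp.add_apply]
  omega

theorem vSupport_single_some (i : ι) {m : ℕ} (hm : m ≠ 0) :
    vSupport (Finsupp.single (some i) m) = {i} := by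
  ext j; simp [Finsupp.single_apply, hm, eq_comm]

theorem vSupport_sum_single (S : Finset ι) :
    vSupport (∑ i ∈ S, Finsupp.single (some i) 1) = S := by
  ext i; simp [Finsupp.finsetSum_apply, Finsupp.single_apply]

end VariableSupport

section VBoundedFunctional

variable {ι : Type*} (N c : ℕ)

noncomputable def vBoundedFunctional : MvPolynomial (Option ι) (ZMod 2) →ₗ[ZMod 2] ZMod 2 :=
  (basisMonomials (Option ι) (ZMod 2)).constr (ZMod 2)
    fun d => if d.degree = N ∧ (vSupport d).card ≤ c then 1 else 0

theorem vBoundedFunctional_monomial (d : Option ι →₀ ℕ) (a : ZMod 2) :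
    vBoundedFunctional N c (monomial d a) =
      a * if d.degree = N ∧ (vSupport d).card ≤ c then 1 else 0 := by
  have h : monomial d a = a • basisMonomials (Option ι) (ZMod 2) d := by
    simp [coe_basisMonomials, smul_monomial]
  rw [h, map_smul, vBoundedFunctional, Module.Basis.constr_basis, smul_eq_mul]

variable [DecidableEq ι]

theorem vBoundedFunctional_monomial_mul_X_pow_mul_prod (d : Option ι →₀ ℕ) (a : ZMod 2) (e : ℕ)
    (S : Finset ι) :
    vBoundedFunctional N c (monomial d a * (X none ^ e * ∏ i ∈ S, X (some i))) =
      a * if d.degree + e + S.card = N ∧ (vSupport d ∪ S).card ≤ c then 1 else 0 := by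
  rw [monomial_mul_X_pow_mul_prod, vBoundedFunctional_monomial, map_add, map_add,
    Finsupp.degree_single, degree_sum_single_some, vSupport_add, vSupport_add, vSupport_single_none,
    vSupport_sum_single, union_empty]

theorem vBoundedFunctional_X_pow_mul_prod (e : ℕ) (S : Finset ι) :
    vBoundedFunctional N c (X none ^ e * ∏ i ∈ S, X (some i)) =
      if e + S.card = N ∧ S.card ≤ c then 1 else 0 := by
  have h : vSupport (0 : Option ι →₀ ℕ) = ∅ := by ext; simp
  simpa [h] using vBoundedFunctional_monomial_mul_X_pow_mul_prod N c 0 1 e S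

theorem vBoundedFunctional_monomial_mul_sq_add_mul (d : Option ι →₀ ℕ) (a : ZMod 2) (i : ι) :
    vBoundedFunctional N c (monomial d a * (X (some i) ^ 2 + X (some i) * X none)) = 0 := by
  have hsq : monomial d a * X (some i) ^ 2 = monomial (d + Finsupp.single (some i) 2) a := by
    rw [X_pow_eq_monomial, monomial_mul, mul_one]
  have hmul : monomial d a * (X (some i) * X none) =
      monomial d a * (X none ^ 1 * ∏ j ∈ {i}, X (some j)) := by
    rw [pow_one, prod_singleton, mul_comm (X (some i))]
  rw [mul_add, map_add, hsq, hmul, vBoundedFunctional_monomial_mul_X_pow_mul_prod,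
    vBoundedFunctional_monomial, map_add, Finsupp.degree_single, vSupport_add,
    vSupport_single_some _ two_ne_zero, card_singleton]
  exact CharTwo.add_self_eq_zero _

theorem vBoundedFunctional_monomial_mul_prod_of_lt (d : Option ι →₀ ℕ) (a : ZMod 2)
    {S : Finset ι} (hS : c < S.card) :
    vBoundedFunctional N c (monomial d a * ∏ i ∈ S, X (some i)) = 0 := by
  have h := vBoundedFunctional_monomial_mul_X_pow_mul_prod N c d a 0 S
  rw [pow_zero, one_mul] at h
  rw [h, if_neg fun h' => (card_le_card subset_union_right).not_gt (h'.2.trans_lt hS), mul_zero]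

theorem vBoundedFunctional_monomial_mul_sum_powerset {s b : ℕ} (hc : c < 2 ^ s) (hb : 0 < b)
    (hN : N < c + 2 ^ s * b) (d : Option ι →₀ ℕ) (a : ZMod 2) {L : Finset ι}
    (hL : 2 ^ s * b < L.card) :
    vBoundedFunctional N c (monomial d a *
      ∑ S ∈ L.powerset.filter (fun S => S.card ≤ c + 1),
        X none ^ (L.card - 1 - S.card) * ∏ i ∈ S, X (some i)) = 0 := by
  have hbig : 2 ^ s ≤ 2 ^ s * b := Nat.le_mul_of_pos_right _ hb
  have hterm : ∀ S ∈ L.powerset.filter (fun S => S.card ≤ c + 1),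
      vBoundedFunctional N c
          (monomial d a * (X none ^ (L.card - 1 - S.card) * ∏ i ∈ S, X (some i))) =
        a * if d.degree + (L.card - 1) = N ∧ (vSupport d ∪ S).card ≤ c then 1 else 0 := by
    intro S hS
    rw [mem_filter] at hS
    rw [vBoundedFunctional_monomial_mul_X_pow_mul_prod,
      show d.degree + (L.card - 1 - S.card) + S.card = d.degree + (L.card - 1) by omega]
  rw [mul_sum, map_sum, sum_congr rfl hterm]
  by_cases hdeg : d.degree + (L.card - 1) = N
  · have hT := card_vSupport_le_degree d
    simp only [hdeg, true_and]
    rw [← mul_sum, sum_filter_of_ne fun S _ h => ?_,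
      sum_powerset_card_union_le_eq_zero (vSupport d) L hc hb (r := L.card - 1 - 2 ^ s * b)
        (by omega) (by omega), mul_zero]
    by_contra hS
    exact h (if_neg fun h' => hS ((card_le_card subset_union_right).trans h' |>.trans c.le_succ))
  · simp [hdeg]

end VBoundedFunctional

theorem MvPolynomial.map_eq_zero_of_mem_ideal_span {σ R M : Type*} [CommSemiring R]
    [AddCommMonoid M] [Module R M] (ψ : MvPolynomial σ R →ₗ[R] M) {s : Set (MvPolynomial σ R)}
    (hs : ∀ g ∈ s, ∀ d a, ψ (monomial d a * g) = 0) {x : MvPolynomial σ R}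
    (hx : x ∈ Ideal.span s) : ψ x = 0 := by
  suffices h : ∀ p, ψ (p * x) = 0 by simpa using h 1
  induction hx using Submodule.span_induction with
  | mem g hg =>
    intro p
    induction p using MvPolynomial.induction_on' with
    | monomial d a => exact hs g hg d a
    | add p q hp hq => rw [add_mul, map_add, hp, hq, add_zero]
  | zero => simp
  | add x y _ _ hx hy => intro p; rw [mul_add, map_add, hx, hy, add_zero]
  | smul q x _ hx => intro p; rw [smul_eq_mul, ← mul_assoc, hx]

theorem vBoundedFunctional_eq_zero_of_mem_polygonIdeal {n k s b : ℕ} (hk : 2 ≤ k)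
    (hc : k - 2 < 2 ^ s) (hb : 0 < b) (hn : n = k + 1 + 2 ^ s * b)
    {x : MvPolynomial (Option (Fin (n - 1))) (ZMod 2)} (hx : x ∈ polygonIdeal n k) :
    vBoundedFunctional (n - 4) (k - 2) x = 0 := by
  refine MvPolynomial.map_eq_zero_of_mem_ideal_span _ ?_ hx
  rintro g ((⟨i, rfl⟩ | ⟨S, hS, rfl⟩) | ⟨L, ⟨hL, -⟩, rfl⟩) d a
  · exact vBoundedFunctional_monomial_mul_sq_add_mul _ _ d a i
  · exact vBoundedFunctional_monomial_mul_prod_of_lt _ _ d a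
      (by rw [show S.card = k from hS]; omega)
  · have hpos : 0 < 2 ^ s * b := Nat.mul_pos (Nat.two_pow_pos s) hb
    rw [show k - 1 = k - 2 + 1 by omega]
    exact vBoundedFunctional_monomial_mul_sum_powerset _ _ hc hb (by omega) d a (by omega)

theorem exists_phi3_general (n k t k₀ B D : ℕ)
    (hk₀ : 1 ≤ k₀) (hk₀' : k₀ ≤ 2 ^ t) (hk : k = 2 ^ t + k₀)
    (hB : 1 ≤ B) (hn : n = k + 1 + 2 ^ t * B + D)
    (hBeven : Even B) (hD0 : D = 0) :
    ∃ φ₃ : homComponent n k (n - 4) →ₗ[ZMod 2] ZMod 2,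
      ∀ S : Finset (Fin (n - 1)), S.card ≤ k - 1 →
        ∀ hx : Ideal.Quotient.mk (polygonIdeal n k)
            (X none ^ (n - 4 - S.card) * ∏ i ∈ S, X (some i)) ∈ homComponent n k (n - 4),
          φ₃ ⟨Ideal.Quotient.mk (polygonIdeal n k)
              (X none ^ (n - 4 - S.card) * ∏ i ∈ S, X (some i)), hx⟩ =
            (if S.card < k - 1 then 1 else 0) := by
  obtain ⟨b, rfl⟩ := hBeven
  have hk2 : 2 ≤ k := by have := Nat.one_le_two_pow (n := t); omega
  have hc : k - 2 < 2 ^ (t + 1) := by rw [pow_succ]; omega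
  have hn' : n = k + 1 + 2 ^ (t + 1) * b := by rw [hn, hD0, pow_succ]; ring
  have hb : 0 < b := by omega
  have hψ : (polygonIdeal n k).restrictScalars (ZMod 2) ≤
      LinearMap.ker (vBoundedFunctional (n - 4) (k - 2)) :=
    fun x hx => vBoundedFunctional_eq_zero_of_mem_polygonIdeal hk2 hc hb hn' hx
  refine ⟨((polygonIdeal n k).restrictScalars (ZMod 2)).liftQ _ hψ ∘ₗ
    (Submodule.Quotient.restrictScalarsEquiv (ZMod 2) _).symm.toLinearMap ∘ₗ
    (homComponent n k (n - 4)).subtype, fun S hS _ => ?_⟩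
  simp only [LinearMap.comp_apply, Submodule.subtype_apply, LinearEquiv.coe_coe]
  rw [← Ideal.Quotient.mk_eq_mk, Submodule.Quotient.restrictScalarsEquiv_symm_mk,
    Submodule.liftQ_apply, vBoundedFunctional_X_pow_mul_prod]
  have hpos : 0 < 2 ^ (t + 1) * b := Nat.mul_pos (Nat.two_pow_pos _) hb
  exact if_congr (by omega) rfl rfl

/-- Case `B` even and `D = 0` of the Notation: there is an `F₂`-linear map `φ₃`
on the degree-`(n−4)` component of `A_{n,k}` sending the class of the monomial
`R^{n−4−|S|}·∏_{i∈S} V_i` (for `|S| ≤ k−1`) to `1` if `|S| < k−1` and to `0` if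
`|S| = k−1`.  Here `S : Finset (Fin (n-1))`, with `i ∈ S` corresponding to the
variable `X (some i)`, i.e. `V_{i+1}`. -/
theorem exists_phi3 (n k t k₀ B D C : ℕ)
    (hk₀ : 1 ≤ k₀) (hk₀' : k₀ ≤ 2 ^ t) (hk : k = 2 ^ t + k₀)
    (hB : 1 ≤ B) (hD : D < 2 ^ t) (hn : n = k + 1 + 2 ^ t * B + D)
    (hC : C = k₀ + D - 1) (hnk : 2 * k < n)
    (hBeven : Even B) (hD0 : D = 0) :
    ∃ φ₃ : homComponent n k (n - 4) →ₗ[ZMod 2] ZMod 2,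
      ∀ S : Finset (Fin (n - 1)), S.card ≤ k - 1 →
        ∀ hx : Ideal.Quotient.mk (polygonIdeal n k)
            (X none ^ (n - 4 - S.card) * ∏ i ∈ S, X (some i)) ∈ homComponent n k (n - 4),
          φ₃ ⟨Ideal.Quotient.mk (polygonIdeal n k)
              (X none ^ (n - 4 - S.card) * ∏ i ∈ S, X (some i)), hx⟩ =
            (if S.card < k - 1 then 1 else 0) :=
  exists_phi3_general n k t k₀ B D hk₀ hk₀' hk hB hn hBeven hD0
end
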